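/- The map B → {((v,α),b) ∈ (V × V*) × B : (v,α) ∈ L, μ v = ρ b, α = σ(b)∘μ} sending b to ((a(b), σ(b)∘μ), b) is surjective if and only if ker μ ∩ ker L = 0, where ker L = {v ∈ V : (v,0) ∈ L}. (Fibrewise equivalence between the non-degeneracy condition of a 1-shifted coisotropic structure on the projection G ⋉ M → G of an action groupoid and the moment-map non-degeneracy condition of a Hamiltonian action of a quasi-symplectic groupoid on a Dirac manifold.) -/
import Mathlib


/-- A subspace `L ⊆ V × V*` is Lagrangian if it equals its orthogonal
complement with respect to the symmetric pairing
`⟨(v,α),(w,β)⟩ = α(w) + β(v)`. -/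
def IsLagrangian {V : Type*} [AddCommGroup V] [Module ℝ V]
    (L : Submodule ℝ (V × Module.Dual ℝ V)) : Prop :=
  ∀ x : V × Module.Dual ℝ V, x ∈ L ↔ ∀ y ∈ L, x.2 y.1 + y.2 x.1 = 0

/-- Fibrewise equivalence between the non-degeneracy condition of a 1-shifted
coisotropic structure on the projection `G ⋉ M → G` of an action groupoid and
the moment-map non-degeneracy condition `ker μ ∩ ker L = 0` of a Hamiltonian
action of a quasi-symplectic groupoid on a Dirac manifold. -/
theorem hamiltonian_action_nondegeneracy_iff
    {B V W : Type*}
    [AddCommGroup B] [Module ℝ B] [FiniteDimensional ℝ B]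
    [AddCommGroup V] [Module ℝ V] [FiniteDimensional ℝ V]
    [AddCommGroup W] [Module ℝ W] [FiniteDimensional ℝ W]
    (ρ : B →ₗ[ℝ] W) (σ : B →ₗ[ℝ] Module.Dual ℝ W)
    (μ : V →ₗ[ℝ] W) (act : B →ₗ[ℝ] V)
    (hma : μ ∘ₗ act = ρ)
    (L : Submodule ℝ (V × Module.Dual ℝ V)) (hL : IsLagrangian L)
    (hmem : ∀ b : B, (act b, σ b ∘ₗ μ) ∈ L) :
    (∀ (v : V) (α : Module.Dual ℝ V) (b' : B),
      (v, α) ∈ L → μ v = ρ b' → α = σ b' ∘ₗ μ →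
      ∃ b : B, act b = v ∧ σ b ∘ₗ μ = α ∧ b = b') ↔
    (∀ v : V, μ v = 0 → (v, (0 : Module.Dual ℝ V)) ∈ L → v = 0) := by
  constructor
  · intro h v hv hvL
    obtain ⟨b, hb, -, hb0⟩ := h v 0 0 hvL (by simp [hv]) (by simp)
    rw [hb0] at hb
    simpa using hb.symm
  · intro h v α b' hvL hμ hα
    refine ⟨b', ?_, hα.symm, rfl⟩
    have hdiff : ((v, α) - (act b', σ b' ∘ₗ μ) : V × Module.Dual ℝ V) ∈ L :=
      L.sub_mem hvL (hmem b')
    have hsub : ((v - act b', (0 : Module.Dual ℝ V)) : V × Module.Dual ℝ V) ∈ L := by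
      simpa [Prod.sub_def, hα] using hdiff
    have hker : μ (v - act b') = 0 := by
      have : μ (act b') = ρ b' := by
        rw [← hma]; rfl
      simp [map_sub, this, hμ]
    have := h _ hker hsub
    exact (sub_eq_zero.mp this).symm
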